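/- Let k ≥ 3, H a connected k-uniform hypergraph with degrees d_i, and b_i > 0 with b'_i = b_i^{−(k−1)} Σ_{{i,i2,...,ik}∈E(H)} b_{i2}···b_{ik}. Set g(i,j) = (d_i + d_j + √((d_i−d_j)² + 4 b'_i b'_j))/2. Then min over edges e, pairs {i,j} ⊆ e of g(i,j) ≤ ρ(Q(H)) ≤ max over such pairs of g(i,j), with equality on either side iff d_i + b'_i is constant over all vertices. -/

import Mathlib

open scoped BigOperators

namespace TensorSR

variable {n p : ℕ}

/-- `(A x)_i` for a tensor whose rows are indexed by `Fin n` and whose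
"tails" (the remaining `p` indices, so the tensor has order `p+1`) are
functions `Fin p → Fin n`.  The real entries are coerced to `ℂ`. -/
noncomputable def tApply (A : Fin n → (Fin p → Fin n) → ℝ) (x : Fin n → ℂ) (i : Fin n) : ℂ :=
  ∑ t : Fin p → Fin n, (A i t : ℂ) * ∏ j, x (t j)

/-- `lam` is an eigenvalue of the tensor `A`: `A x = lam x^{[p]}` for some `x ≠ 0`. -/
def IsEigenvalue (A : Fin n → (Fin p → Fin n) → ℝ) (lam : ℂ) : Prop :=
  ∃ x : Fin n → ℂ, x ≠ 0 ∧ ∀ i, tApply A x i = lam * (x i) ^ p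

/-- The spectral radius: the sup of moduli of eigenvalues. -/
noncomputable def specRad (A : Fin n → (Fin p → Fin n) → ℝ) : ℝ :=
  sSup {r : ℝ | ∃ lam : ℂ, IsEigenvalue A lam ∧ r = ‖lam‖}

/-- `A` is entrywise nonnegative. -/
def Nonneg (A : Fin n → (Fin p → Fin n) → ℝ) : Prop := ∀ i t, 0 ≤ A i t

/-- Weak irreducibility: there is no nonempty proper `I ⊆ [n]` such that
`a_{i t} = 0` whenever `i ∈ I` and some entry of `t` lies outside `I`. -/
def WeaklyIrreducible (A : Fin n → (Fin p → Fin n) → ℝ) : Prop :=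
  ¬ ∃ I : Set (Fin n), I.Nonempty ∧ I ≠ Set.univ ∧
      ∀ i ∈ I, ∀ t : Fin p → Fin n, (∃ j, t j ∉ I) → A i t = 0

/-- The `i`-th row sum of `A`. -/
def rowSum (A : Fin n → (Fin p → Fin n) → ℝ) (i : Fin n) : ℝ := ∑ t, A i t

/-- `j ∈ N(i)`: some nonzero entry in row `i` involves index `j`. -/
def Nbr (A : Fin n → (Fin p → Fin n) → ℝ) (i j : Fin n) : Prop :=
  ∃ t, A i t ≠ 0 ∧ ∃ q, t q = j

end TensorSR

open TensorSR

namespace HypSR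

variable {n k : ℕ}

/-- Connectivity of a hypergraph with edge set `E`: every two vertices are
joined by a walk. -/
def HConnected (E : Finset (Finset (Fin n))) : Prop :=
  ∀ u v : Fin n,
    Relation.ReflTransGen (fun a b : Fin n => ∃ e ∈ E, a ∈ e ∧ b ∈ e) u v

/-- Degree of a vertex. -/
def deg (E : Finset (Finset (Fin n))) (i : Fin n) : ℕ :=
  (E.filter (fun e => i ∈ e)).card

/-- The adjacency tensor of a `k`-uniform hypergraph: order `k`, dimension `n`,
entry `1/(k-1)!` at `(i₁,…,i_k)` when `{i₁,…,i_k}` is an edge, and `0` otherwise. -/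
noncomputable def adjT (E : Finset (Finset (Fin n))) (k : ℕ) :
    Fin n → (Fin (k-1) → Fin n) → ℝ :=
  fun i t =>
    if insert i (Finset.image t Finset.univ) ∈ E then ((k-1).factorial : ℝ)⁻¹ else 0

/-- The signless Laplacian tensor `Q = D + A`. -/
noncomputable def signlessT (E : Finset (Finset (Fin n))) (k : ℕ) :
    Fin n → (Fin (k-1) → Fin n) → ℝ :=
  fun i t => adjT E k i t + if (∀ q, t q = i) then (deg E i : ℝ) else 0

end HypSR

open HypSR

/-!
The spectral radius is the minimum of the Collatz–Wielandt function
`y ↦ maxᵢ (Q y)ᵢ / yᵢ^(k-1)` over positive vectors. Connectivity gives a Harnack inequality for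
positive vectors with bounded ratios, so the minimum is attained on a compact box. A minimiser
with the most rows having slack is an eigenvector: shrinking it slightly on those rows would give
a minimiser with slack also on a neighbouring row. Every eigenvalue has modulus at most any value
of the Collatz–Wielandt function, so this eigenvalue is `ρ(Q)`.

Write the positive eigenvector as `b * w`. Row `i` of the eigen-equation reads
`(ρ - dᵢ) wᵢ^(k-1) = bᵢ^-(k-1) ∑_{e ∋ i} ∏_{v ∈ e - i} b_v w_v`, which is at most `b'ᵢ W^(k-1)`
when `w ≤ W` on the neighbours of `i`, with equality only if `w = W` there. At a maximum `u` of `w`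
and a largest neighbour `v` of `u`, the rows `u` and `v` give `(ρ - d_u)(ρ - d_v) ≤ b'_u b'_v`, that
is `ρ ≤ g(u, v)`; a minimum of `w` gives the lower bound. If `ρ` is the largest (smallest) `g`, both
rows are tight, so `w` takes the value `w_v` on all neighbours of `u` and `w_u` on all neighbours
of `v`; a third vertex of an edge through `u` and `v` gives `w_v = w_u`. Hence the maxima
(minima) of `w` spread along edges, `w` is constant, and `ρ = dᵢ + b'ᵢ` for every `i`.
-/

open Finset Filter Topology

namespace Finset

variable {α : Type*} [DecidableEq α] {m : ℕ} {s : Finset α} {t : Fin m → α}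

theorem injective_of_image_eq (hs : #s = m) (ht : image t univ = s) : Function.Injective t := by
  rw [← Set.injOn_univ, ← coe_univ, ← card_image_iff, ht, hs, card_univ, Fintype.card_fin]

theorem card_filter_image_eq [Fintype α] (hs : #s = m) :
    #{t : Fin m → α | image t univ = s} = m.factorial := by
  have hinj : Function.Injective fun (σ : Fin m ≃ s) (j : Fin m) => (σ j : α) :=
    fun σ τ h => Equiv.ext fun j => Subtype.ext (congrFun h j)
  suffices ({t : Fin m → α | image t univ = s} : Finset _) = univ.map ⟨_, hinj⟩ by
    rw [this, card_map, card_univ, Fintype.card_equiv (s.equivFinOfCardEq hs).symm,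
      Fintype.card_fin]
  ext t
  simp only [mem_filter, mem_univ, true_and, mem_map, Function.Embedding.coeFn_mk]
  constructor
  · intro ht
    have hmem : ∀ j, t j ∈ s := fun j => ht ▸ mem_image_of_mem t (mem_univ j)
    refine ⟨Equiv.ofBijective (fun j => ⟨t j, hmem j⟩) ?_, rfl⟩
    rw [Fintype.bijective_iff_injective_and_card]
    exact ⟨fun a b h => injective_of_image_eq hs ht (congrArg Subtype.val h), by simp [hs]⟩
  · rintro ⟨σ, rfl⟩
    ext v
    simp only [mem_image, mem_univ, true_and]
    exact ⟨fun ⟨j, hj⟩ => hj ▸ (σ j).2, fun hv => ⟨σ.symm ⟨v, hv⟩, by simp⟩⟩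

theorem sum_filter_image_eq [Fintype α] {R : Type*} [CommSemiring R] (x : α → R)
    (hs : #s = m) :
    ∑ t : Fin m → α with image t univ = s, ∏ j, x (t j) = m.factorial * ∏ v ∈ s, x v := by
  rw [sum_congr rfl fun t ht => ?_, sum_const, card_filter_image_eq hs, nsmul_eq_mul]
  have ht : image t univ = s := (mem_filter.mp ht).2
  rw [← ht, prod_image fun a _ b _ h => injective_of_image_eq hs ht h]

theorem insert_image_eq_iff {k : ℕ} {e : Finset α} {i : α} (he : #e = k) (hi : i ∈ e)
    (t : Fin (k - 1) → α) : insert i (image t univ) = e ↔ image t univ = e.erase i := by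
  refine ⟨fun h => ?_, fun h => by rw [h, insert_erase hi]⟩
  have hi' : i ∉ image t univ := by
    intro hmem
    have hcard : #e ≤ k - 1 := by
      rw [← h, insert_eq_of_mem hmem]
      exact card_image_le.trans (by simp)
    have := card_pos.mpr ⟨i, hi⟩
    omega
  rw [← h, erase_insert hi']

end Finset

namespace HypSR

variable {n k : ℕ} {E : Finset (Finset (Fin n))}

section Apply

variable {R : Type*} [CommSemiring R]

def adjRow (E : Finset (Finset (Fin n))) (x : Fin n → R) (i : Fin n) : R :=
  ∑ e ∈ E with i ∈ e, ∏ v ∈ e.erase i, x v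

def signlessApply (E : Finset (Finset (Fin n))) (k : ℕ) (x : Fin n → R) (i : Fin n) : R :=
  deg E i * x i ^ (k - 1) + adjRow E x i

theorem adjRow_const_mul (hunif : ∀ e ∈ E, #e = k) (c : R) (x : Fin n → R) (i : Fin n) :
    adjRow E (fun v => c * x v) i = c ^ (k - 1) * adjRow E x i := by
  rw [adjRow, adjRow, mul_sum]
  refine sum_congr rfl fun e he => ?_
  obtain ⟨heE, hie⟩ := mem_filter.mp he
  rw [prod_mul_distrib, prod_const, card_erase_of_mem hie, hunif e heE]

theorem signlessApply_const_mul (hunif : ∀ e ∈ E, #e = k) (c : R) (x : Fin n → R) (i : Fin n) :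
    signlessApply E k (fun v => c * x v) i = c ^ (k - 1) * signlessApply E k x i := by
  rw [signlessApply, signlessApply, adjRow_const_mul hunif]
  ring

end Apply

theorem tApply_adjT (hunif : ∀ e ∈ E, #e = k) (x : Fin n → ℂ) (i : Fin n) :
    tApply (adjT E k) x i = adjRow E x i := by
  have hfac : ((k - 1).factorial : ℂ) ≠ 0 := by exact_mod_cast (k - 1).factorial_ne_zero
  calc tApply (adjT E k) x i
      = ∑ t : Fin (k - 1) → Fin n with insert i (image t univ) ∈ E,
          ((k - 1).factorial : ℂ)⁻¹ * ∏ j, x (t j) := by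
        simp only [tApply, adjT, sum_filter]
        exact sum_congr rfl fun t _ => by split_ifs <;> simp
    _ = ∑ e ∈ E with i ∈ e, ∑ t : Fin (k - 1) → Fin n with image t univ = e.erase i,
          ((k - 1).factorial : ℂ)⁻¹ * ∏ j, x (t j) := by
        rw [← sum_fiberwise_of_maps_to (g := fun t => insert i (image t univ))
          (t := {e ∈ E | i ∈ e}) fun t ht => by simpa using (mem_filter.mp ht).2]
        refine sum_congr rfl fun e he => ?_
        obtain ⟨heE, hie⟩ := mem_filter.mp he
        rw [filter_filter]
        refine sum_congr (filter_congr fun t _ => ?_) fun _ _ => rfl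
        rw [← insert_image_eq_iff (hunif e heE) hie]
        exact ⟨fun h => h.2, fun h => ⟨h ▸ heE, h⟩⟩
    _ = adjRow E x i := by
        refine sum_congr rfl fun e he => ?_
        obtain ⟨heE, hie⟩ := mem_filter.mp he
        rw [← mul_sum, sum_filter_image_eq x (by rw [card_erase_of_mem hie, hunif e heE]),
          inv_mul_cancel_left₀ hfac]

theorem tApply_signlessT (hunif : ∀ e ∈ E, #e = k) (x : Fin n → ℂ) (i : Fin n) :
    tApply (signlessT E k) x i = signlessApply E k x i := by
  have hdiag : ∑ t : Fin (k - 1) → Fin n,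
      ((if ∀ q, t q = i then (deg E i : ℝ) else 0 : ℝ) : ℂ) * ∏ j, x (t j) =
        deg E i * x i ^ (k - 1) := by
    rw [Fintype.sum_eq_single (fun _ => i) fun t ht => ?_]
    · simp
    · rw [if_neg fun h => ht (funext h), Complex.ofReal_zero, zero_mul]
  rw [signlessApply, add_comm, ← hdiag, ← tApply_adjT hunif, tApply, tApply, ← sum_add_distrib]
  simp only [signlessT, Complex.ofReal_add, add_mul]

theorem ofReal_signlessApply (x : Fin n → ℝ) (i : Fin n) :
    ((signlessApply E k x i : ℝ) : ℂ) = signlessApply E k (fun v => (x v : ℂ)) i := by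
  simp [signlessApply, adjRow]

theorem norm_signlessApply_le (x : Fin n → ℂ) (i : Fin n) :
    ‖signlessApply E k x i‖ ≤ signlessApply E k (‖x ·‖) i := by
  refine (norm_add_le _ _).trans (add_le_add (by simp) ?_)
  exact (norm_sum_le _ _).trans_eq (sum_congr rfl fun _ _ => norm_prod _ _)

def nbhd (E : Finset (Finset (Fin n))) (i : Fin n) : Finset (Fin n) :=
  {v | v ≠ i ∧ ∃ e ∈ E, i ∈ e ∧ v ∈ e}

@[simp]
theorem mem_nbhd {i v : Fin n} : v ∈ nbhd E i ↔ v ≠ i ∧ ∃ e ∈ E, i ∈ e ∧ v ∈ e := by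
  simp [nbhd]

theorem mem_nbhd_of_mem_erase {e : Finset (Fin n)} {i v : Fin n} (he : e ∈ E) (hi : i ∈ e)
    (hv : v ∈ e.erase i) : v ∈ nbhd E i :=
  mem_nbhd.mpr ⟨ne_of_mem_erase hv, e, he, hi, mem_of_mem_erase hv⟩

section Real

variable {x y : Fin n → ℝ} {i : Fin n}

theorem adjRow_nonneg (hx : ∀ v, 0 ≤ x v) : 0 ≤ adjRow E x i :=
  sum_nonneg fun _ _ => prod_nonneg fun v _ => hx v

theorem adjRow_pos (hx : ∀ v, 0 < x v) (hi : 0 < deg E i) : 0 < adjRow E x i :=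
  sum_pos (fun _ _ => prod_pos fun v _ => hx v) (card_pos.mp hi)

theorem prod_erase_le_adjRow (hx : ∀ v, 0 ≤ x v) {e : Finset (Fin n)} (he : e ∈ E)
    (hi : i ∈ e) : ∏ v ∈ e.erase i, x v ≤ adjRow E x i :=
  single_le_sum (f := fun e => ∏ v ∈ e.erase i, x v) (fun _ _ => prod_nonneg fun v _ => hx v)
    (mem_filter.mpr ⟨he, hi⟩)

theorem adjRow_le_adjRow (hx : ∀ v, 0 ≤ x v) (hxy : ∀ v ∈ nbhd E i, x v ≤ y v) :
    adjRow E x i ≤ adjRow E y i := by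
  refine sum_le_sum fun e he => prod_le_prod (fun v _ => hx v) fun v hv => hxy v ?_
  exact mem_nbhd_of_mem_erase (mem_filter.mp he).1 (mem_filter.mp he).2 hv

theorem adjRow_lt_adjRow (hx : ∀ v, 0 < x v) (hxy : ∀ v ∈ nbhd E i, x v ≤ y v)
    (hlt : ∃ v ∈ nbhd E i, x v < y v) : adjRow E x i < adjRow E y i := by
  obtain ⟨v, hv, hxyv⟩ := hlt
  obtain ⟨hvi, e, he, hie, hve⟩ := mem_nbhd.mp hv
  refine sum_lt_sum (fun e' he' => prod_le_prod (fun v _ => (hx v).le) fun v hv => ?_) ?_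
  · exact hxy v (mem_nbhd_of_mem_erase (mem_filter.mp he').1 (mem_filter.mp he').2 hv)
  refine ⟨e, mem_filter.mpr ⟨he, hie⟩, prod_lt_prod (fun v _ => hx v) (fun w hw => ?_) ?_⟩
  · exact hxy w (mem_nbhd_of_mem_erase he hie hw)
  · exact ⟨v, mem_erase.mpr ⟨hvi, hve⟩, hxyv⟩

theorem signlessApply_nonneg (hx : ∀ v, 0 ≤ x v) : 0 ≤ signlessApply E k x i :=
  add_nonneg (mul_nonneg (Nat.cast_nonneg _) (pow_nonneg (hx i) _)) (adjRow_nonneg hx)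

theorem signlessApply_le_signlessApply (hx : ∀ v, 0 ≤ x v) (hxy : ∀ v, x v ≤ y v) :
    signlessApply E k x i ≤ signlessApply E k y i := by
  unfold signlessApply
  gcongr
  exacts [hx i, hxy i, adjRow_le_adjRow hx fun v _ => hxy v]

theorem continuous_signlessApply (E : Finset (Finset (Fin n))) (k : ℕ) (i : Fin n) :
    Continuous fun x : Fin n → ℝ => signlessApply E k x i := by
  unfold signlessApply adjRow
  fun_prop

end Real

theorem deg_pos_of_mem {e : Finset (Fin n)} {i : Fin n} (he : e ∈ E) (hi : i ∈ e) :
    0 < deg E i :=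
  card_pos.mpr ⟨e, mem_filter.mpr ⟨he, hi⟩⟩

theorem nbhd_nonempty (hk : 2 ≤ k) (hunif : ∀ e ∈ E, #e = k) {i : Fin n} (hi : 0 < deg E i) :
    (nbhd E i).Nonempty := by
  obtain ⟨e, he⟩ := card_pos.mp hi
  obtain ⟨heE, hie⟩ := mem_filter.mp he
  obtain ⟨v, hve, hvi⟩ := exists_mem_ne (by rw [hunif e heE]; omega) i
  exact ⟨v, mem_nbhd.mpr ⟨hvi, e, heE, hie, hve⟩⟩

theorem exists_mem_nbhd_mem_nbhd (hk : 3 ≤ k) (hunif : ∀ e ∈ E, #e = k) {u v : Fin n}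
    (hv : v ∈ nbhd E u) : ∃ z ∈ nbhd E u, z ∈ nbhd E v := by
  obtain ⟨hvu, e, he, hue, hve⟩ := mem_nbhd.mp hv
  have hcard : 0 < #((e.erase u).erase v) := by
    rw [card_erase_of_mem (mem_erase.mpr ⟨hvu, hve⟩), card_erase_of_mem hue, hunif e he]
    omega
  obtain ⟨z, hz⟩ := card_pos.mp hcard
  obtain ⟨hzv, hzu, hze⟩ : z ≠ v ∧ z ≠ u ∧ z ∈ e := by simpa using hz
  exact ⟨z, mem_nbhd.mpr ⟨hzu, e, he, hue, hze⟩, mem_nbhd.mpr ⟨hzv, e, he, hve, hze⟩⟩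

theorem HConnected.forall_of_closed (hconn : HConnected E) {p : Fin n → Prop}
    (hp : ∀ e ∈ E, ∀ a ∈ e, ∀ c ∈ e, p a → p c) {a : Fin n} (ha : p a) (v : Fin n) : p v := by
  induction hconn a v with
  | refl => exact ha
  | tail _ hbc ih =>
    obtain ⟨e, he, hb, hc⟩ := hbc
    exact hp e he _ hb _ hc ih

theorem HConnected.exists_crossing (hconn : HConnected E) {S : Finset (Fin n)} {a c : Fin n}
    (ha : a ∈ S) (hc : c ∉ S) : ∃ e ∈ E, ∃ u ∈ e, u ∈ S ∧ ∃ v ∈ e, v ∉ S := by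
  by_contra! h
  exact hc (hconn.forall_of_closed (p := (· ∈ S))
    (fun e he u hu v hv huS => h e he u hu huS v hv) ha c)

theorem HConnected.deg_pos (hconn : HConnected E) {e : Finset (Fin n)} {a : Fin n} (he : e ∈ E)
    (ha : a ∈ e) (i : Fin n) : 0 < deg E i :=
  hconn.forall_of_closed (p := (0 < deg E ·)) (fun _ he _ _ _ hc _ => deg_pos_of_mem he hc)
    (deg_pos_of_mem he ha) i

section Harnack

variable {y : Fin n → ℝ} {M : ℝ}

theorem le_mul_of_mem_edge (hk : 2 ≤ k) (hunif : ∀ e ∈ E, #e = k) (hy : ∀ v, 0 < y v)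
    (hM : 1 ≤ M) (hrow : ∀ i, signlessApply E k y i ≤ M * y i ^ (k - 1))
    {e : Finset (Fin n)} (he : e ∈ E) {u v : Fin n} (hu : u ∈ e) (hv : v ∈ e) :
    y v ≤ M * y u := by
  obtain ⟨u₀, hu₀, hmin⟩ := exists_min_image e y ⟨u, hu⟩
  suffices y v ≤ M * y u₀ from
    this.trans (mul_le_mul_of_nonneg_left (hmin u hu) (zero_le_one.trans hM))
  rcases eq_or_ne v u₀ with rfl | hvu₀
  · exact le_mul_of_one_le_left (hy v).le hM
  have hv' : v ∈ e.erase u₀ := mem_erase.mpr ⟨hvu₀, hv⟩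
  have hlow : y v * y u₀ ^ (k - 2) ≤ ∏ w ∈ e.erase u₀, y w := by
    rw [← mul_prod_erase _ _ hv']
    refine mul_le_mul_of_nonneg_left ?_ (hy v).le
    have hcard : #((e.erase u₀).erase v) = k - 2 := by
      rw [card_erase_of_mem hv', card_erase_of_mem hu₀, hunif e he]; omega
    rw [← hcard, ← prod_const]
    exact prod_le_prod (fun _ _ => (hy u₀).le)
      fun w hw => hmin w (mem_of_mem_erase (mem_of_mem_erase hw))
  have hup : ∏ w ∈ e.erase u₀, y w ≤ M * y u₀ * y u₀ ^ (k - 2) := by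
    calc ∏ w ∈ e.erase u₀, y w ≤ signlessApply E k y u₀ :=
          (prod_erase_le_adjRow (fun w => (hy w).le) he hu₀).trans
            (le_add_of_nonneg_left (by have := hy u₀; positivity))
      _ ≤ M * y u₀ ^ (k - 1) := hrow u₀
      _ = M * y u₀ * y u₀ ^ (k - 2) := by rw [mul_assoc, ← pow_succ']; congr 2; omega
  exact le_of_mul_le_mul_right (hlow.trans hup) (pow_pos (hy u₀) _)

theorem harnack (hk : 2 ≤ k) (hunif : ∀ e ∈ E, #e = k) (hconn : HConnected E)
    (hy : ∀ v, 0 < y v) (hM : 1 ≤ M) (hrow : ∀ i, signlessApply E k y i ≤ M * y i ^ (k - 1))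
    (u v : Fin n) : y u ≤ M ^ n * y v := by
  -- the vertices within a factor `M ^ m` of `y u` gain a vertex at each step until all are in
  set S : ℕ → Finset (Fin n) := fun m => {v | y u ≤ M ^ m * y v}
  have hS : ∀ m, S m ⊆ S (m + 1) := fun m w hw => by
    simp only [S, mem_filter, mem_univ, true_and] at hw ⊢
    exact hw.trans (mul_le_mul_of_nonneg_right (pow_le_pow_right₀ hM m.le_succ) (hy w).le)
  have hgrow : ∀ m, S m = univ ∨ m + 1 ≤ #(S m) := by
    intro m
    induction m with
    | zero => exact .inr (card_pos.mpr ⟨u, by simp [S]⟩)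
    | succ m ih =>
      by_cases huniv : S m = univ
      · exact .inl (eq_univ_of_forall fun w => hS m (huniv ▸ mem_univ w))
      obtain ⟨c, hc⟩ := not_forall.mp fun h => huniv (eq_univ_of_forall h)
      have huS : u ∈ S m := by
        simpa [S] using le_mul_of_one_le_left (hy u).le (one_le_pow₀ hM)
      obtain ⟨e, he, a, hae, haS, c', hc'e, hc'S⟩ := hconn.exists_crossing huS hc
      have hc'S' : c' ∈ S (m + 1) := by
        simp only [S, mem_filter, mem_univ, true_and] at haS ⊢
        calc y u ≤ M ^ m * y a := haS
          _ ≤ M ^ m * (M * y c') := mul_le_mul_of_nonneg_left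
            (le_mul_of_mem_edge hk hunif hy hM hrow he hc'e hae)
            (pow_nonneg (zero_le_one.trans hM) _)
          _ = M ^ (m + 1) * y c' := by ring
      have := card_le_card (insert_subset hc'S' (hS m))
      rw [card_insert_of_notMem hc'S] at this
      exact .inr ((Nat.succ_le_succ (ih.resolve_left huniv)).trans this)
  have hSn : S n = univ := (hgrow n).resolve_right fun h => by
    have := (card_le_univ (S n)).trans_eq (Fintype.card_fin n)
    omega
  have hv : v ∈ S n := hSn ▸ mem_univ v
  simpa [S] using hv

end Harnack

section CollatzWielandt

variable [Nonempty (Fin n)] {y z : Fin n → ℝ} {c : ℝ}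

/-- The Collatz–Wielandt function; its minimum over positive vectors is the spectral radius. -/
noncomputable def cwMax (E : Finset (Finset (Fin n))) (k : ℕ) (y : Fin n → ℝ) : ℝ :=
  univ.sup' univ_nonempty fun i => signlessApply E k y i / y i ^ (k - 1)

theorem signlessApply_le_cwMax_mul {i : Fin n} (hy : 0 < y i) :
    signlessApply E k y i ≤ cwMax E k y * y i ^ (k - 1) :=
  (div_le_iff₀ (pow_pos hy _)).mp
    (le_sup' (fun i => signlessApply E k y i / y i ^ (k - 1)) (mem_univ i))

theorem cwMax_le (hy : ∀ v, 0 < y v) (h : ∀ i, signlessApply E k y i ≤ c * y i ^ (k - 1)) :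
    cwMax E k y ≤ c :=
  sup'_le _ _ fun i _ => (div_le_iff₀ (pow_pos (hy i) _)).mpr (h i)

theorem cwMax_lt (hy : ∀ v, 0 < y v) (h : ∀ i, signlessApply E k y i < c * y i ^ (k - 1)) :
    cwMax E k y < c :=
  (sup'_lt_iff _).mpr fun i _ => (div_lt_iff₀ (pow_pos (hy i) _)).mpr (h i)

theorem cwMax_const_mul (hunif : ∀ e ∈ E, #e = k) (hc : 0 < c) (y : Fin n → ℝ) :
    cwMax E k (fun v => c * y v) = cwMax E k y :=
  sup'_congr _ rfl fun i _ => by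
    rw [signlessApply_const_mul hunif, mul_pow, mul_div_mul_left _ _ (pow_ne_zero _ hc.ne')]

theorem continuousOn_cwMax : ContinuousOn (cwMax E k) {y | ∀ v, 0 < y v} :=
  ContinuousOn.finset_sup'_apply _ fun i _ => (continuous_signlessApply E k i).continuousOn.div
    (by fun_prop) fun _ hy => (pow_pos (hy i) _).ne'

theorem exists_isMinOn_cwMax (hk : 2 ≤ k) (hunif : ∀ e ∈ E, #e = k) (hconn : HConnected E) :
    ∃ y ∈ {y : Fin n → ℝ | ∀ v, 0 < y v}, IsMinOn (cwMax E k) {y | ∀ v, 0 < y v} y := by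
  set M := max (cwMax E k 1) 1
  have hM : 1 ≤ M := le_max_right _ _
  have hMn : 0 < (M ^ n)⁻¹ := inv_pos.mpr (pow_pos (zero_lt_one.trans_le hM) n)
  set B : Set (Fin n → ℝ) := Set.Icc (fun _ => (M ^ n)⁻¹) 1
  have hBpos : B ⊆ {y | ∀ v, 0 < y v} := fun y hy v => hMn.trans_le (hy.1 v)
  have h1B : (1 : Fin n → ℝ) ∈ B := ⟨fun _ => inv_le_one_of_one_le₀ (one_le_pow₀ hM), le_rfl⟩
  obtain ⟨y, hyB, hymin⟩ :=
    isCompact_Icc.exists_isMinOn ⟨1, h1B⟩ ((continuousOn_cwMax (E := E) (k := k)).mono hBpos)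
  refine ⟨y, hBpos hyB, fun z hz => ?_⟩
  obtain ⟨i₀, -, hi₀⟩ := exists_max_image univ z univ_nonempty
  set z' := fun v => (z i₀)⁻¹ * z v
  have hz' : ∀ v, 0 < z' v := fun v => mul_pos (inv_pos.mpr (hz i₀)) (hz v)
  change cwMax E k y ≤ cwMax E k z
  rw [← cwMax_const_mul hunif (inv_pos.mpr (hz i₀)) z]
  by_cases hz'M : cwMax E k z' ≤ M
  · refine hymin ⟨fun v => ?_, fun v => ?_⟩
    · have hrow : ∀ i, signlessApply E k z' i ≤ M * z' i ^ (k - 1) := fun i =>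
        (signlessApply_le_cwMax_mul (hz' i)).trans
          (mul_le_mul_of_nonneg_right hz'M (pow_pos (hz' i) _).le)
      have := harnack hk hunif hconn hz' hM hrow i₀ v
      rwa [show z' i₀ = 1 from inv_mul_cancel₀ (hz i₀).ne', ← inv_mul_le_iff₀ (by positivity),
        mul_one] at this
    · exact (inv_mul_le_iff₀ (hz i₀)).mpr ((hi₀ v (mem_univ v)).trans_eq (mul_one _).symm)
  · exact (hymin h1B).trans ((le_max_left _ _).trans (not_le.mp hz'M).le)

noncomputable def strictRows (E : Finset (Finset (Fin n))) (k : ℕ) (μ : ℝ) (y : Fin n → ℝ) :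
    Finset (Fin n) :=
  {i | signlessApply E k y i < μ * y i ^ (k - 1)}

theorem exists_strictRows_ssubset (hconn : HConnected E) (hy : ∀ v, 0 < y v)
    (hmin : IsMinOn (cwMax E k) {y | ∀ v, 0 < y v} y)
    (hne : (strictRows E k (cwMax E k y) y).Nonempty) :
    ∃ z, (∀ v, 0 < z v) ∧ cwMax E k z = cwMax E k y ∧
      strictRows E k (cwMax E k y) y ⊂ strictRows E k (cwMax E k y) z := by
  set μ := cwMax E k y
  set J := strictRows E k μ y
  have hrow : ∀ i, signlessApply E k y i ≤ μ * y i ^ (k - 1) :=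
    fun i => signlessApply_le_cwMax_mul (hy i)
  have hmemJ : ∀ i, i ∈ J ↔ signlessApply E k y i < μ * y i ^ (k - 1) := by
    simp [J, strictRows]
  obtain ⟨c, hc⟩ : ∃ c, c ∉ J := by
    by_contra! h
    exact (cwMax_lt hy fun i => (hmemJ i).mp (h i)).false
  obtain ⟨a, ha⟩ := hne
  obtain ⟨e, he, a, hae, haJ, c, hce, hcJ⟩ := hconn.exists_crossing ha hc
  -- shrink `y` on `J` by a factor `s < 1` so close to `1` that the rows of `J` stay strict
  have hs : ∀ᶠ s in 𝓝[<] (1 : ℝ), ∀ j ∈ J, signlessApply E k y j < μ * (s * y j) ^ (k - 1) := by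
    refine (eventually_all_finset J).mpr fun j hj => nhdsWithin_le_nhds ?_
    refine ContinuousAt.eventually_lt continuousAt_const (by fun_prop) ?_
    simpa using (hmemJ j).mp hj
  have hs0 : ∀ᶠ s in 𝓝[<] (1 : ℝ), 0 < s := nhdsWithin_le_nhds (Ioi_mem_nhds one_pos)
  obtain ⟨s, ⟨hsJ, hs_pos⟩, hs1⟩ := ((hs.and hs0).and self_mem_nhdsWithin).exists
  set z := fun v => if v ∈ J then s * y v else y v
  have hz : ∀ v, 0 < z v := fun v => by
    simp only [z]; split_ifs; exacts [mul_pos hs_pos (hy v), hy v]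
  have hzy : ∀ v, z v ≤ y v := fun v => by
    simp only [z]; split_ifs; exacts [mul_le_of_le_one_left (hy v).le hs1.le, le_rfl]
  have hz_of_notMem : ∀ v ∉ J, z v = y v := fun v hv => if_neg hv
  have hQ : ∀ i, signlessApply E k z i ≤ signlessApply E k y i :=
    fun i => signlessApply_le_signlessApply (fun v => (hz v).le) hzy
  have hzJ : ∀ j ∈ J, signlessApply E k z j < μ * z j ^ (k - 1) := fun j hj => by
    simpa only [z, if_pos hj] using (hQ j).trans_lt (hsJ j hj)
  have hzc : signlessApply E k z c < μ * z c ^ (k - 1) := by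
    refine lt_of_lt_of_le ?_ ((hrow c).trans_eq (by rw [hz_of_notMem c hcJ]))
    unfold signlessApply
    rw [hz_of_notMem c hcJ]
    refine (add_lt_add_iff_left _).mpr (adjRow_lt_adjRow hz (fun v _ => hzy v) ⟨a, ?_, ?_⟩)
    · exact mem_nbhd.mpr ⟨fun h => hcJ (h ▸ haJ), e, he, hce, hae⟩
    · simpa only [z, if_pos haJ] using mul_lt_of_lt_one_left (hy a) hs1
  have hzμ : cwMax E k z = μ := by
    refine le_antisymm (cwMax_le hz fun i => ?_) (hmin hz)
    by_cases hi : i ∈ J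
    · exact (hzJ i hi).le
    · exact (hQ i).trans ((hrow i).trans_eq (by rw [hz_of_notMem i hi]))
  refine ⟨z, hz, hzμ, (ssubset_iff_of_subset fun j hj => ?_).mpr ⟨c, ?_, hcJ⟩⟩
  · simpa [strictRows] using hzJ j hj
  · simpa [strictRows] using hzc

theorem exists_pos_eigenvector_cwMax (hk : 2 ≤ k) (hunif : ∀ e ∈ E, #e = k)
    (hconn : HConnected E) :
    ∃ y : Fin n → ℝ, (∀ v, 0 < y v) ∧
      ∀ i, signlessApply E k y i = cwMax E k y * y i ^ (k - 1) := by
  set Min := {y : Fin n → ℝ | (∀ v, 0 < y v) ∧ IsMinOn (cwMax E k) {y | ∀ v, 0 < y v} y}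
  obtain ⟨y₀, hy₀, hy₀min⟩ := exists_isMinOn_cwMax hk hunif hconn
  -- among the minimisers, take one with the most strict rows
  obtain ⟨y, ⟨hy, hymin⟩, hmax⟩ :=
    (measure fun y => n - #(strictRows E k (cwMax E k y) y)).wf.has_min Min ⟨y₀, hy₀, hy₀min⟩
  refine ⟨y, hy, fun i => le_antisymm (signlessApply_le_cwMax_mul (hy i))
    (not_lt.mp fun hi => ?_)⟩
  obtain ⟨z, hz, hzy, hsub⟩ :=
    exists_strictRows_ssubset hconn hy hymin ⟨i, by simpa [strictRows] using hi⟩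
  refine hmax z ⟨hz, fun w hw => hzy ▸ hymin hw⟩ (show n - _ < n - _ from ?_)
  have := card_lt_card hsub
  have := (card_le_univ (strictRows E k (cwMax E k y) z)).trans_eq (Fintype.card_fin n)
  rw [hzy]
  omega

theorem norm_le_cwMax (hunif : ∀ e ∈ E, #e = k) {lam : ℂ}
    (hlam : IsEigenvalue (signlessT E k) lam) (hz : ∀ v, 0 < z v) : ‖lam‖ ≤ cwMax E k z := by
  obtain ⟨x, hx0, hx⟩ := hlam
  obtain ⟨i, -, hi⟩ := exists_max_image univ (fun v => ‖x v‖ / z v) univ_nonempty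
  set c := ‖x i‖ / z i
  have hxc : ∀ v, ‖x v‖ ≤ c * z v := fun v => (div_le_iff₀ (hz v)).mp (hi v (mem_univ v))
  have hcz : c * z i = ‖x i‖ := div_mul_cancel₀ _ (hz i).ne'
  obtain ⟨j, hj⟩ := Function.ne_iff.mp hx0
  have hc : 0 < c := (div_pos (norm_pos_iff.mpr hj) (hz j)).trans_le (hi j (mem_univ j))
  have hxi : 0 < ‖x i‖ := hcz ▸ mul_pos hc (hz i)
  refine le_of_mul_le_mul_right ?_ (pow_pos hxi (k - 1))
  calc ‖lam‖ * ‖x i‖ ^ (k - 1) = ‖signlessApply E k x i‖ := by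
        rw [← tApply_signlessT hunif, hx i, norm_mul, norm_pow]
    _ ≤ signlessApply E k (fun v => c * z v) i :=
        (norm_signlessApply_le x i).trans
          (signlessApply_le_signlessApply (fun v => norm_nonneg _) hxc)
    _ = c ^ (k - 1) * signlessApply E k z i := signlessApply_const_mul hunif c z i
    _ ≤ c ^ (k - 1) * (cwMax E k z * z i ^ (k - 1)) :=
        mul_le_mul_of_nonneg_left (signlessApply_le_cwMax_mul (hz i)) (pow_nonneg hc.le _)
    _ = cwMax E k z * ‖x i‖ ^ (k - 1) := by rw [← hcz]; ring

end CollatzWielandt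

theorem exists_pos_eigenvector_specRad [Nonempty (Fin n)] (hk : 2 ≤ k)
    (hunif : ∀ e ∈ E, #e = k) (hconn : HConnected E) :
    ∃ y : Fin n → ℝ, (∀ v, 0 < y v) ∧
      ∀ i, signlessApply E k y i = specRad (signlessT E k) * y i ^ (k - 1) := by
  obtain ⟨y, hy, heig⟩ := exists_pos_eigenvector_cwMax hk hunif hconn
  obtain ⟨i⟩ := ‹Nonempty (Fin n)›
  have hμ : 0 ≤ cwMax E k y := nonneg_of_mul_nonneg_left
    ((heig i).symm.trans_ge (signlessApply_nonneg fun v => (hy v).le)) (pow_pos (hy i) _)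
  have heigC : IsEigenvalue (signlessT E k) (cwMax E k y) := by
    refine ⟨fun v => (y v : ℂ), Function.ne_iff.mpr ⟨i, by simpa using (hy i).ne'⟩, fun j => ?_⟩
    rw [tApply_signlessT hunif, ← ofReal_signlessApply, heig j]
    push_cast
    rfl
  suffices IsGreatest {r | ∃ lam : ℂ, IsEigenvalue (signlessT E k) lam ∧ r = ‖lam‖}
      (cwMax E k y) from ⟨y, hy, fun j => by rw [specRad, this.csSup_eq, heig j]⟩
  refine ⟨⟨_, heigC, (Complex.norm_of_nonneg hμ).symm⟩, ?_⟩
  rintro r ⟨lam, hlam, rfl⟩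
  exact norm_le_cwMax hunif hlam hy

theorem specRad_signlessT_empty :
    specRad (signlessT (∅ : Finset (Finset (Fin n))) k) = 0 := by
  refine le_antisymm (Real.sSup_nonpos ?_) (Real.sSup_nonneg ?_)
  · rintro _ ⟨lam, ⟨x, hx0, hx⟩, rfl⟩
    obtain ⟨i, hi⟩ := Function.ne_iff.mp hx0
    have := hx i
    rw [tApply_signlessT (by simp)] at this
    simp only [signlessApply, adjRow, deg, filter_empty, card_empty, sum_empty, Nat.cast_zero,
      zero_mul, add_zero] at this
    simp [(mul_eq_zero.mp this.symm).resolve_right (pow_ne_zero _ hi)]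
  · rintro _ ⟨lam, -, rfl⟩
    exact norm_nonneg _

section LargerRoot

variable {a c B z : ℝ}

/-- The larger root of `(z - a) * (z - c) = B`. -/
noncomputable def largerRoot (a c B : ℝ) : ℝ := (a + c + √((a - c) ^ 2 + 4 * B)) / 2

theorem largerRoot_le_iff (ha : a ≤ z) (hc : c ≤ z) :
    largerRoot a c B ≤ z ↔ B ≤ (z - a) * (z - c) := by
  rw [largerRoot, div_le_iff₀ two_pos, ← le_sub_iff_add_le', Real.sqrt_le_iff]
  constructor
  · rintro ⟨-, h⟩; nlinarith
  · intro h; constructor <;> nlinarith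

theorem le_largerRoot_iff (hB : 0 ≤ B) (ha : a ≤ z) (hc : c ≤ z) :
    z ≤ largerRoot a c B ↔ (z - a) * (z - c) ≤ B := by
  rw [largerRoot, le_div_iff₀ two_pos, ← sub_le_iff_le_add',
    Real.le_sqrt (by linarith) (by positivity)]
  constructor <;> intro h <;> nlinarith

theorem largerRoot_eq_of_add_eq {B₁ B₂ : ℝ} (hB₁ : 0 ≤ B₁) (hB₂ : 0 ≤ B₂) (ha : a + B₁ = z)
    (hc : c + B₂ = z) : largerRoot a c (B₁ * B₂) = z := by
  have ha' : a ≤ z := by linarith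
  have hc' : c ≤ z := by linarith
  have h : (z - a) * (z - c) = B₁ * B₂ := by
    rw [show z - a = B₁ by linarith, show z - c = B₂ by linarith]
  exact le_antisymm ((largerRoot_le_iff ha' hc').mpr h.ge)
    ((le_largerRoot_iff (mul_nonneg hB₁ hB₂) ha' hc').mpr h.le)

end LargerRoot

/-- `weightedDeg E k b i` is the `i`-th row sum of the adjacency tensor after the diagonal
similarity by `b`. -/
noncomputable def weightedDeg (E : Finset (Finset (Fin n))) (k : ℕ) (b : Fin n → ℝ)
    (i : Fin n) : ℝ :=
  (b i ^ (k - 1))⁻¹ * adjRow E b i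

theorem weightedDeg_pos {b : Fin n → ℝ} (hb : ∀ v, 0 < b v) {i : Fin n} (hi : 0 < deg E i) :
    0 < weightedDeg E k b i :=
  mul_pos (inv_pos.mpr (pow_pos (hb i) _)) (adjRow_pos hb hi)

theorem weightedDeg_mul_pow {b : Fin n → ℝ} {i : Fin n} (hunif : ∀ e ∈ E, #e = k) (W : ℝ) :
    weightedDeg E k b i * W ^ (k - 1) = (b i ^ (k - 1))⁻¹ * adjRow E (b * fun _ => W) i := by
  rw [show b * (fun _ => W) = fun v => W * b v from funext fun v => mul_comm _ _,
    adjRow_const_mul hunif, weightedDeg]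
  ring

def pairRoots (E : Finset (Finset (Fin n))) (k : ℕ) (b : Fin n → ℝ) : Set ℝ :=
  {r | ∃ e ∈ E, ∃ i ∈ e, ∃ j ∈ e, i ≠ j ∧
    r = largerRoot (deg E i) (deg E j) (weightedDeg E k b i * weightedDeg E k b j)}

theorem finite_pairRoots (b : Fin n → ℝ) : (pairRoots E k b).Finite := by
  refine (Set.finite_range fun p : Fin n × Fin n => largerRoot (deg E p.1) (deg E p.2)
    (weightedDeg E k b p.1 * weightedDeg E k b p.2)).subset ?_
  rintro _ ⟨_, _, i, _, j, _, _, rfl⟩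
  exact ⟨(i, j), rfl⟩

theorem largerRoot_mem_pairRoots {b : Fin n → ℝ} {u v : Fin n} (hv : v ∈ nbhd E u) :
    largerRoot (deg E u) (deg E v) (weightedDeg E k b u * weightedDeg E k b v) ∈
      pairRoots E k b := by
  obtain ⟨hvu, e, he, hue, hve⟩ := mem_nbhd.mp hv
  exact ⟨e, he, u, hue, v, hve, hvu.symm, rfl⟩

/-- `w` is a positive eigenvector, with eigenvalue `ρ`, of `Q` conjugated by `diag b`. -/
structure ScaledEigen (E : Finset (Finset (Fin n))) (k : ℕ) (b w : Fin n → ℝ) (ρ : ℝ) :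
    Prop where
  b_pos : ∀ v, 0 < b v
  w_pos : ∀ v, 0 < w v
  eq : ∀ i, signlessApply E k (b * w) i = ρ * (b i * w i) ^ (k - 1)

theorem ScaledEigen.of_eigen {b y : Fin n → ℝ} {ρ : ℝ} (hb : ∀ v, 0 < b v)
    (hy : ∀ v, 0 < y v) (heig : ∀ i, signlessApply E k y i = ρ * y i ^ (k - 1)) :
    ScaledEigen E k b (y / b) ρ := by
  have hby : b * (y / b) = y := funext fun v => mul_div_cancel₀ _ (hb v).ne'
  refine ⟨hb, fun v => div_pos (hy v) (hb v), fun i => ?_⟩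
  rw [hby, ← Pi.mul_apply b, hby, heig]

namespace ScaledEigen

variable {b w : Fin n → ℝ} {ρ : ℝ} {i u v : Fin n}

theorem pos (h : ScaledEigen E k b w ρ) (v : Fin n) : 0 < (b * w) v :=
  mul_pos (h.b_pos v) (h.w_pos v)

theorem sub_deg_mul_pow_eq (h : ScaledEigen E k b w ρ) (i : Fin n) :
    (ρ - deg E i) * w i ^ (k - 1) = (b i ^ (k - 1))⁻¹ * adjRow E (b * w) i := by
  have hbi := pow_pos (h.b_pos i) (k - 1)
  have := h.eq i
  rw [signlessApply, Pi.mul_apply, mul_pow] at this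
  field_simp
  linear_combination -this

theorem deg_lt (h : ScaledEigen E k b w ρ) (hi : 0 < deg E i) : (deg E i : ℝ) < ρ := by
  have hpos : 0 < (b i ^ (k - 1))⁻¹ * adjRow E (b * w) i :=
    mul_pos (inv_pos.mpr (pow_pos (h.b_pos i) _)) (adjRow_pos h.pos hi)
  rw [← h.sub_deg_mul_pow_eq] at hpos
  exact sub_pos.mp (pos_of_mul_pos_left hpos (pow_pos (h.w_pos i) _).le)

theorem sub_deg_mul_pow_le (h : ScaledEigen E k b w ρ) (hunif : ∀ e ∈ E, #e = k) {W : ℝ}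
    (hW : ∀ v ∈ nbhd E i, w v ≤ W) :
    (ρ - deg E i) * w i ^ (k - 1) ≤ weightedDeg E k b i * W ^ (k - 1) := by
  rw [h.sub_deg_mul_pow_eq, weightedDeg_mul_pow hunif]
  gcongr ?_ * ?_
  · exact (inv_pos.mpr (pow_pos (h.b_pos i) _)).le
  exact adjRow_le_adjRow (fun v => (h.pos v).le)
    fun v hv => mul_le_mul_of_nonneg_left (hW v hv) (h.b_pos v).le

theorem eqOn_nbhd_of_sub_deg_mul_pow_eq (h : ScaledEigen E k b w ρ) (hunif : ∀ e ∈ E, #e = k)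
    {W : ℝ} (hW : ∀ v ∈ nbhd E i, w v ≤ W)
    (heq : (ρ - deg E i) * w i ^ (k - 1) = weightedDeg E k b i * W ^ (k - 1)) :
    ∀ v ∈ nbhd E i, w v = W := by
  by_contra! ⟨v, hv, hvW⟩
  rw [h.sub_deg_mul_pow_eq, weightedDeg_mul_pow hunif] at heq
  refine (mul_lt_mul_of_pos_left (adjRow_lt_adjRow h.pos
    (fun v hv => mul_le_mul_of_nonneg_left (hW v hv) (h.b_pos v).le)
    ⟨v, hv, mul_lt_mul_of_pos_left ((hW v hv).lt_of_ne hvW) (h.b_pos v)⟩)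
    (inv_pos.mpr (pow_pos (h.b_pos i) _))).ne heq

theorem le_sub_deg_mul_pow (h : ScaledEigen E k b w ρ) (hunif : ∀ e ∈ E, #e = k) {W : ℝ}
    (hW0 : 0 ≤ W) (hW : ∀ v ∈ nbhd E i, W ≤ w v) :
    weightedDeg E k b i * W ^ (k - 1) ≤ (ρ - deg E i) * w i ^ (k - 1) := by
  rw [h.sub_deg_mul_pow_eq, weightedDeg_mul_pow hunif]
  gcongr ?_ * ?_
  · exact (inv_pos.mpr (pow_pos (h.b_pos i) _)).le
  exact adjRow_le_adjRow (fun v => mul_nonneg (h.b_pos v).le hW0)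
    fun v hv => mul_le_mul_of_nonneg_left (hW v hv) (h.b_pos v).le

theorem eqOn_nbhd_of_eq_sub_deg_mul_pow (h : ScaledEigen E k b w ρ) (hunif : ∀ e ∈ E, #e = k)
    {W : ℝ} (hW0 : 0 < W) (hW : ∀ v ∈ nbhd E i, W ≤ w v)
    (heq : weightedDeg E k b i * W ^ (k - 1) = (ρ - deg E i) * w i ^ (k - 1)) :
    ∀ v ∈ nbhd E i, w v = W := by
  by_contra! ⟨v, hv, hvW⟩
  rw [h.sub_deg_mul_pow_eq, weightedDeg_mul_pow hunif] at heq
  refine (mul_lt_mul_of_pos_left (adjRow_lt_adjRow (fun v => mul_pos (h.b_pos v) hW0)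
    (fun v hv => mul_le_mul_of_nonneg_left (hW v hv) (h.b_pos v).le)
    ⟨v, hv, mul_lt_mul_of_pos_left ((hW v hv).lt_of_ne' hvW) (h.b_pos v)⟩)
    (inv_pos.mpr (pow_pos (h.b_pos i) _))).ne heq

theorem pair_le_of_isMax (h : ScaledEigen E k b w ρ) (hunif : ∀ e ∈ E, #e = k)
    (hdeg : ∀ i, 0 < deg E i) (hu : ∀ x, w x ≤ w u) (hv : ∀ x ∈ nbhd E u, w x ≤ w v) :
    (ρ - deg E u) * (ρ - deg E v) ≤ weightedDeg E k b u * weightedDeg E k b v := by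
  have hA := h.sub_deg_mul_pow_le hunif hv
  have hB := h.sub_deg_mul_pow_le (i := v) hunif fun x _ => hu x
  have := h.w_pos u; have := h.w_pos v
  have := sub_pos.mpr (h.deg_lt (hdeg v)); have := weightedDeg_pos (k := k) h.b_pos (hdeg u)
  refine le_of_mul_le_mul_right ?_ (by positivity : 0 < w u ^ (k - 1) * w v ^ (k - 1))
  calc (ρ - deg E u) * (ρ - deg E v) * (w u ^ (k - 1) * w v ^ (k - 1))
      = ((ρ - deg E u) * w u ^ (k - 1)) * ((ρ - deg E v) * w v ^ (k - 1)) := by ring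
    _ ≤ (weightedDeg E k b u * w v ^ (k - 1)) * (weightedDeg E k b v * w u ^ (k - 1)) :=
        mul_le_mul hA hB (by positivity) (by positivity)
    _ = _ := by ring

theorem eq_of_pair_eq_of_isMax (hk : 3 ≤ k) (h : ScaledEigen E k b w ρ)
    (hunif : ∀ e ∈ E, #e = k) (hdeg : ∀ i, 0 < deg E i) (hu : ∀ x, w x ≤ w u)
    (hvu : v ∈ nbhd E u) (hv : ∀ x ∈ nbhd E u, w x ≤ w v)
    (heq : (ρ - deg E u) * (ρ - deg E v) = weightedDeg E k b u * weightedDeg E k b v) :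
    ρ = deg E u + weightedDeg E k b u ∧ ∀ x ∈ nbhd E u, w x = w u := by
  have hA := h.sub_deg_mul_pow_le hunif hv
  have hB := h.sub_deg_mul_pow_le (i := v) hunif fun x _ => hu x
  have := h.w_pos u; have := h.w_pos v
  have := sub_pos.mpr (h.deg_lt (hdeg u)); have := weightedDeg_pos (k := k) h.b_pos (hdeg v)
  obtain ⟨hA', hB'⟩ := (mul_eq_mul_iff_eq_and_eq_of_pos hA hB (by positivity) (by positivity)).mp
    (by linear_combination (w u ^ (k - 1) * w v ^ (k - 1)) * heq)
  have hnu := h.eqOn_nbhd_of_sub_deg_mul_pow_eq hunif hv hA'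
  have hnv := h.eqOn_nbhd_of_sub_deg_mul_pow_eq hunif (fun x _ => hu x) hB'
  obtain ⟨z, hzu, hzv⟩ := exists_mem_nbhd_mem_nbhd hk hunif hvu
  have hwv : w v = w u := (hnu z hzu).symm.trans (hnv z hzv)
  rw [hwv] at hA'
  refine ⟨?_, fun x hx => (hnu x hx).trans hwv⟩
  linarith [mul_right_cancel₀ (pow_pos (h.w_pos u) (k - 1)).ne' hA']

theorem le_pair_of_isMin (h : ScaledEigen E k b w ρ) (hunif : ∀ e ∈ E, #e = k)
    (hdeg : ∀ i, 0 < deg E i) (hu : ∀ x, w u ≤ w x) (hv : ∀ x ∈ nbhd E u, w v ≤ w x) :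
    weightedDeg E k b u * weightedDeg E k b v ≤ (ρ - deg E u) * (ρ - deg E v) := by
  have hA := h.le_sub_deg_mul_pow hunif (h.w_pos v).le hv
  have hB := h.le_sub_deg_mul_pow (i := v) hunif (h.w_pos u).le fun x _ => hu x
  have := h.w_pos u; have := h.w_pos v
  have := sub_pos.mpr (h.deg_lt (hdeg u)); have := weightedDeg_pos (k := k) h.b_pos (hdeg v)
  refine le_of_mul_le_mul_right ?_ (by positivity : 0 < w u ^ (k - 1) * w v ^ (k - 1))
  calc weightedDeg E k b u * weightedDeg E k b v * (w u ^ (k - 1) * w v ^ (k - 1))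
      = (weightedDeg E k b u * w v ^ (k - 1)) * (weightedDeg E k b v * w u ^ (k - 1)) := by ring
    _ ≤ ((ρ - deg E u) * w u ^ (k - 1)) * ((ρ - deg E v) * w v ^ (k - 1)) :=
        mul_le_mul hA hB (by positivity) (by positivity)
    _ = _ := by ring

theorem eq_of_pair_eq_of_isMin (hk : 3 ≤ k) (h : ScaledEigen E k b w ρ)
    (hunif : ∀ e ∈ E, #e = k) (hdeg : ∀ i, 0 < deg E i) (hu : ∀ x, w u ≤ w x)
    (hvu : v ∈ nbhd E u) (hv : ∀ x ∈ nbhd E u, w v ≤ w x)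
    (heq : weightedDeg E k b u * weightedDeg E k b v = (ρ - deg E u) * (ρ - deg E v)) :
    ρ = deg E u + weightedDeg E k b u ∧ ∀ x ∈ nbhd E u, w x = w u := by
  have hA := h.le_sub_deg_mul_pow hunif (h.w_pos v).le hv
  have hB := h.le_sub_deg_mul_pow (i := v) hunif (h.w_pos u).le fun x _ => hu x
  have := h.w_pos u; have := h.w_pos v
  have := sub_pos.mpr (h.deg_lt (hdeg v)); have := weightedDeg_pos (k := k) h.b_pos (hdeg u)
  obtain ⟨hA', hB'⟩ := (mul_eq_mul_iff_eq_and_eq_of_pos hA hB (by positivity) (by positivity)).mp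
    (by linear_combination (w u ^ (k - 1) * w v ^ (k - 1)) * heq)
  have hnu := h.eqOn_nbhd_of_eq_sub_deg_mul_pow hunif (h.w_pos v) hv hA'
  have hnv := h.eqOn_nbhd_of_eq_sub_deg_mul_pow hunif (h.w_pos u) (fun x _ => hu x) hB'
  obtain ⟨z, hzu, hzv⟩ := exists_mem_nbhd_mem_nbhd hk hunif hvu
  have hwv : w v = w u := (hnu z hzu).symm.trans (hnv z hzv)
  rw [hwv] at hA'
  refine ⟨?_, fun x hx => (hnu x hx).trans hwv⟩
  linarith [mul_right_cancel₀ (pow_pos (h.w_pos u) (k - 1)).ne' hA']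

theorem le_sSup_pairRoots [Nonempty (Fin n)] (hk : 2 ≤ k) (h : ScaledEigen E k b w ρ)
    (hunif : ∀ e ∈ E, #e = k) (hdeg : ∀ i, 0 < deg E i) : ρ ≤ sSup (pairRoots E k b) := by
  obtain ⟨u, -, hu⟩ := exists_max_image univ w univ_nonempty
  obtain ⟨v, hv, hvmax⟩ := exists_max_image (nbhd E u) w (nbhd_nonempty hk hunif (hdeg u))
  refine le_trans ?_ (le_csSup (finite_pairRoots b).bddAbove (largerRoot_mem_pairRoots hv))
  refine (le_largerRoot_iff ?_ (h.deg_lt (hdeg u)).le (h.deg_lt (hdeg v)).le).mpr ?_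
  · exact (mul_pos (weightedDeg_pos h.b_pos (hdeg u)) (weightedDeg_pos h.b_pos (hdeg v))).le
  · exact h.pair_le_of_isMax hunif hdeg (fun x => hu x (mem_univ x)) hvmax

theorem sInf_pairRoots_le [Nonempty (Fin n)] (hk : 2 ≤ k) (h : ScaledEigen E k b w ρ)
    (hunif : ∀ e ∈ E, #e = k) (hdeg : ∀ i, 0 < deg E i) : sInf (pairRoots E k b) ≤ ρ := by
  obtain ⟨u, -, hu⟩ := exists_min_image univ w univ_nonempty
  obtain ⟨v, hv, hvmin⟩ := exists_min_image (nbhd E u) w (nbhd_nonempty hk hunif (hdeg u))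
  refine (csInf_le (finite_pairRoots b).bddBelow (largerRoot_mem_pairRoots hv)).trans ?_
  refine (largerRoot_le_iff (h.deg_lt (hdeg u)).le (h.deg_lt (hdeg v)).le).mpr ?_
  exact h.le_pair_of_isMin hunif hdeg (fun x => hu x (mem_univ x)) hvmin

theorem eq_add_weightedDeg_of_mem_upperBounds (hk : 3 ≤ k) (h : ScaledEigen E k b w ρ)
    (hunif : ∀ e ∈ E, #e = k) (hconn : HConnected E) (hdeg : ∀ i, 0 < deg E i)
    (hρ : ρ ∈ upperBounds (pairRoots E k b)) (i : Fin n) :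
    ρ = deg E i + weightedDeg E k b i := by
  have hmax : ∀ u, (∀ x, w x ≤ w u) →
      ρ = deg E u + weightedDeg E k b u ∧ ∀ x ∈ nbhd E u, w x = w u := fun u hu => by
    obtain ⟨v, hv, hvmax⟩ :=
      exists_max_image (nbhd E u) w (nbhd_nonempty (by omega) hunif (hdeg u))
    refine h.eq_of_pair_eq_of_isMax hk hunif hdeg hu hv hvmax
      (le_antisymm (h.pair_le_of_isMax hunif hdeg hu hvmax) ?_)
    exact (largerRoot_le_iff (h.deg_lt (hdeg u)).le (h.deg_lt (hdeg v)).le).mp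
      (hρ (largerRoot_mem_pairRoots hv))
  obtain ⟨u, -, hu⟩ := exists_max_image univ w ⟨i, mem_univ i⟩
  refine (hmax i (hconn.forall_of_closed (p := fun a => ∀ x, w x ≤ w a)
    (fun e he a ha c hc hpa => ?_) (fun x => hu x (mem_univ x)) i)).1
  rcases eq_or_ne c a with rfl | hca
  · exact hpa
  · rwa [(hmax a hpa).2 c (mem_nbhd.mpr ⟨hca, e, he, ha, hc⟩)]

theorem eq_add_weightedDeg_of_mem_lowerBounds (hk : 3 ≤ k) (h : ScaledEigen E k b w ρ)
    (hunif : ∀ e ∈ E, #e = k) (hconn : HConnected E) (hdeg : ∀ i, 0 < deg E i)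
    (hρ : ρ ∈ lowerBounds (pairRoots E k b)) (i : Fin n) :
    ρ = deg E i + weightedDeg E k b i := by
  have hmin : ∀ u, (∀ x, w u ≤ w x) →
      ρ = deg E u + weightedDeg E k b u ∧ ∀ x ∈ nbhd E u, w x = w u := fun u hu => by
    obtain ⟨v, hv, hvmin⟩ :=
      exists_min_image (nbhd E u) w (nbhd_nonempty (by omega) hunif (hdeg u))
    refine h.eq_of_pair_eq_of_isMin hk hunif hdeg hu hv hvmin
      (le_antisymm (h.le_pair_of_isMin hunif hdeg hu hvmin) ?_)
    refine (le_largerRoot_iff ?_ (h.deg_lt (hdeg u)).le (h.deg_lt (hdeg v)).le).mp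
      (hρ (largerRoot_mem_pairRoots hv))
    exact (mul_pos (weightedDeg_pos h.b_pos (hdeg u)) (weightedDeg_pos h.b_pos (hdeg v))).le
  obtain ⟨u, -, hu⟩ := exists_min_image univ w ⟨i, mem_univ i⟩
  refine (hmin i (hconn.forall_of_closed (p := fun a => ∀ x, w a ≤ w x)
    (fun e he a ha c hc hpa => ?_) (fun x => hu x (mem_univ x)) i)).1
  rcases eq_or_ne c a with rfl | hca
  · exact hpa
  · rwa [(hmin a hpa).2 c (mem_nbhd.mpr ⟨hca, e, he, ha, hc⟩)]

theorem eq_sInf_pairRoots [Nonempty (Fin n)] (hk : 2 ≤ k) (h : ScaledEigen E k b w ρ)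
    (hunif : ∀ e ∈ E, #e = k) (hdeg : ∀ i, 0 < deg E i)
    (hconst : ∀ i j, deg E i + weightedDeg E k b i = deg E j + weightedDeg E k b j) :
    ρ = sInf (pairRoots E k b) := by
  obtain ⟨a⟩ := ‹Nonempty (Fin n)›
  have hP : ∀ r ∈ pairRoots E k b, r = deg E a + weightedDeg E k b a := by
    rintro _ ⟨_, _, i, _, j, _, _, rfl⟩
    exact largerRoot_eq_of_add_eq (weightedDeg_pos h.b_pos (hdeg i)).le
      (weightedDeg_pos h.b_pos (hdeg j)).le (hconst i a) (hconst j a)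
  obtain ⟨v, hv⟩ := nbhd_nonempty hk hunif (hdeg a)
  have hne : (pairRoots E k b).Nonempty := ⟨_, largerRoot_mem_pairRoots hv⟩
  refine le_antisymm ?_ (h.sInf_pairRoots_le hk hunif hdeg)
  exact (h.le_sSup_pairRoots hk hunif hdeg).trans ((csSup_le hne fun r hr => (hP r hr).le).trans
    (le_csInf hne fun r hr => (hP r hr).ge))

end ScaledEigen

end HypSR

theorem stmt15_general {n k : ℕ} (hk : 3 ≤ k)
    (E : Finset (Finset (Fin n))) (hunif : ∀ e ∈ E, e.card = k)
    (hconn : HConnected E)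
    (b : Fin n → ℝ) (hb : ∀ i, 0 < b i)
    (b' : Fin n → ℝ)
    (hb' : ∀ i, b' i =
      (b i ^ (k-1))⁻¹ * ∑ e ∈ E.filter (fun e => i ∈ e), ∏ v ∈ e.erase i, b v)
    (g : Fin n → Fin n → ℝ)
    (hg : ∀ i j, g i j =
      ((deg E i : ℝ) + (deg E j : ℝ) +
        Real.sqrt (((deg E i : ℝ) - (deg E j : ℝ)) ^ 2 + 4 * b' i * b' j)) / 2)
    (P : Set ℝ)
    (hP : P = {r : ℝ | ∃ e ∈ E, ∃ i ∈ e, ∃ j ∈ e, i ≠ j ∧ r = g i j}) :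
    sInf P ≤ specRad (signlessT E k) ∧ specRad (signlessT E k) ≤ sSup P ∧
      ((specRad (signlessT E k) = sInf P ∨ specRad (signlessT E k) = sSup P) ↔
        ∀ i j : Fin n, (deg E i : ℝ) + b' i = (deg E j : ℝ) + b' j) := by
  obtain rfl : b' = weightedDeg E k b := funext hb'
  obtain rfl : g = fun i j =>
      largerRoot (deg E i) (deg E j) (weightedDeg E k b i * weightedDeg E k b j) :=
    funext₂ fun i j => by rw [hg, largerRoot, mul_assoc]
  obtain rfl : P = pairRoots E k b := hP
  rcases E.eq_empty_or_nonempty with rfl | ⟨e, he⟩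
  · simp [pairRoots, specRad_signlessT_empty, weightedDeg, adjRow, deg]
  obtain ⟨a, ha⟩ := card_pos.mp ((hunif e he).trans_gt (by omega) : 0 < #e)
  have : Nonempty (Fin n) := ⟨a⟩
  have hdeg := hconn.deg_pos he ha
  obtain ⟨y, hy, heig⟩ := exists_pos_eigenvector_specRad (by omega) hunif hconn
  have h := ScaledEigen.of_eigen hb hy heig
  refine ⟨h.sInf_pairRoots_le (by omega) hunif hdeg, h.le_sSup_pairRoots (by omega) hunif hdeg,
    fun hρ i j => ?_, fun hconst => .inl (h.eq_sInf_pairRoots (by omega) hunif hdeg hconst)⟩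
  have hfin := finite_pairRoots (E := E) (k := k) b
  obtain hρ | hρ := hρ
  · have := h.eq_add_weightedDeg_of_mem_lowerBounds hk hunif hconn hdeg
      (hρ ▸ fun r hr => csInf_le hfin.bddBelow hr)
    rw [← this i, ← this j]
  · have := h.eq_add_weightedDeg_of_mem_upperBounds hk hunif hconn hdeg
      (hρ ▸ fun r hr => le_csSup hfin.bddAbove hr)
    rw [← this i, ← this j]

theorem stmt15 {n k : ℕ} (hn : 0 < n) (hk : 3 ≤ k)
    (E : Finset (Finset (Fin n))) (hunif : ∀ e ∈ E, e.card = k)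
    (hconn : HConnected E)
    (b : Fin n → ℝ) (hb : ∀ i, 0 < b i)
    (b' : Fin n → ℝ)
    (hb' : ∀ i, b' i =
      (b i ^ (k-1))⁻¹ * ∑ e ∈ E.filter (fun e => i ∈ e), ∏ v ∈ e.erase i, b v)
    (g : Fin n → Fin n → ℝ)
    (hg : ∀ i j, g i j =
      ((deg E i : ℝ) + (deg E j : ℝ) +
        Real.sqrt (((deg E i : ℝ) - (deg E j : ℝ)) ^ 2 + 4 * b' i * b' j)) / 2)
    (P : Set ℝ)
    (hP : P = {r : ℝ | ∃ e ∈ E, ∃ i ∈ e, ∃ j ∈ e, i ≠ j ∧ r = g i j}) :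
    sInf P ≤ specRad (signlessT E k) ∧ specRad (signlessT E k) ≤ sSup P ∧
      ((specRad (signlessT E k) = sInf P ∨ specRad (signlessT E k) = sSup P) ↔
        ∀ i j : Fin n, (deg E i : ℝ) + b' i = (deg E j : ℝ) + b' j) :=
  stmt15_general hk E hunif hconn b hb b' hb' g hg P hP
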